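/- Let k = ℤ/2ℤ and let V be a k-vector space. Let s, g, d : V → V be k-linear endomorphisms, and define k-linear endomorphisms of V × V by M₁(x,y) = (x + g y, y), M₂(x,y) = (s x + g y, s y), and Φ(x,y) = (x, d x + y). If M₂ ∘ Φ = Φ ∘ M₁, then: (1) s = id + d ∘ g; (2) d ∘ g = g ∘ d; (3) d ∘ g ∘ d = 0; and (4) s ∘ s = id, i.e. s is an involution. -/
import Mathlib


/-- Algebraic core of Theorem D: from the naturality relation `M₂ ∘ Φ = Φ ∘ M₁`
for the block matrices `M₁ = [[1, g],[0, 1]]`, `M₂ = [[s, g],[0, s]]` and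
`Φ = [[1, 0],[d, 1]]` over `ℤ/2ℤ`, one deduces `s = 1 + d∘g`, `d∘g = g∘d`,
`d∘g∘d = 0`, and that `s` is an involution. -/
theorem stmt0 {V : Type*} [AddCommGroup V] [Module (ZMod 2) V]
    (s g d : V →ₗ[ZMod 2] V)
    (M₁ M₂ Φ : (V × V) →ₗ[ZMod 2] (V × V))
    (hM₁ : ∀ x y : V, M₁ (x, y) = (x + g y, y))
    (hM₂ : ∀ x y : V, M₂ (x, y) = (s x + g y, s y))
    (hΦ : ∀ x y : V, Φ (x, y) = (x, d x + y))
    (h : M₂ ∘ₗ Φ = Φ ∘ₗ M₁) :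
    s = LinearMap.id + d ∘ₗ g ∧
    d ∘ₗ g = g ∘ₗ d ∧
    d ∘ₗ g ∘ₗ d = 0 ∧
    s ∘ₗ s = LinearMap.id := by
  have two : ∀ v : V, v + v = 0 := by
    intro v
    have h2 : (2 : ZMod 2) • v = v + v := two_smul _ v
    have h0 : (2 : ZMod 2) = 0 := rfl
    rw [h0, zero_smul] at h2
    exact h2.symm
  have key : ∀ x y : V, M₂ (Φ (x, y)) = Φ (M₁ (x, y)) := by
    intro x y
    exact congrFun (congrArg DFunLike.coe h) (x, y)
  have key' : ∀ x y : V,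
      (s x + g (d x + y), s (d x + y)) = (x + g y, d (x + g y) + y) := by
    intro x y
    have := key x y
    rwa [hΦ, hM₂, hM₁, hΦ] at this
  -- componentwise equations
  have e1 : ∀ x y : V, s x + g (d x + y) = x + g y := fun x y =>
    congrArg Prod.fst (key' x y)
  have e2 : ∀ x y : V, s (d x + y) = d (x + g y) + y := fun x y =>
    congrArg Prod.snd (key' x y)
  -- s = 1 + d∘g (from e2 with x = 0)
  have hs : ∀ y : V, s y = y + d (g y) := by
    intro y
    have := e2 0 y
    simp only [map_zero, zero_add, add_zero, add_comm] at this
    exact this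
  -- s (d x) = d x (from e2 with y = 0)
  have hsd : ∀ x : V, s (d x) = d x := by
    intro x
    have := e2 x 0
    simpa using this
  -- d g d = 0
  have hdgd : ∀ x : V, d (g (d x)) = 0 := by
    intro x
    have h1 := hsd x
    rw [hs (d x)] at h1
    have := congrArg (fun v => v + d x) h1
    calc d (g (d x)) = d x + d (g (d x)) + d x := by
          rw [add_comm (d x), add_assoc, two, add_zero]
      _ = 0 := by rw [this, two]
  -- g d = d g (from e1 with y = 0 and hs)
  have hgd : ∀ x : V, g (d x) = d (g x) := by
    intro x
    have h1 := e1 x 0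
    simp only [map_zero, add_zero] at h1
    rw [hs x] at h1
    -- x + d (g x) + g (d x) = x
    have h2 : d (g x) + g (d x) = 0 := by
      have := congrArg (fun v => -x + v) h1
      simpa [add_assoc] using this
    calc g (d x) = d (g x) + (d (g x) + g (d x)) := by
          rw [← add_assoc, two, zero_add]
      _ = d (g x) := by rw [h2, add_zero]
  refine ⟨?_, ?_, ?_, ?_⟩
  · ext y; simp [hs y]
  · ext x; simp [hgd x]
  · ext x; simp [hdgd x]
  · ext x
    simp only [LinearMap.comp_apply, LinearMap.id_apply]
    rw [hs x, map_add, hs x, hs (d (g x))]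
    rw [hdgd _]
    abel_nf
    rw [two_smul, two]
    simp [two]
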